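/- arXiv:2604.23193 — 2 statements merged into one kernel-verified Lean document; each statement's English description precedes it below -/
import Mathlib

section
/- Let α, ν ∈ (0,1) and let x ∈ Incomp(α,ν) ⊆ ℝⁿ. Then the set Θ = { i ∈ [n] : ν/√(2n) < |x_i| ≤ √(2/(αn)) } satisfies |Θ| > αn/2. -/
open MeasureTheory ProbabilityTheory Matrix Finset Real
open scoped ENNReal RealInnerProductSpace

noncomputable section

/-- The `ℓ²→ℓ²` operator (spectral) norm of a square real matrix. -/
def specNorm {n : ℕ} (M : Matrix (Fin n) (Fin n) ℝ) : ℝ :=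
  ‖LinearMap.toContinuousLinearMap (Matrix.toEuclideanLin M)‖

/-- Matrix–vector product, as a map on Euclidean space. -/
def mulVecE {n : ℕ} (M : Matrix (Fin n) (Fin n) ℝ) (x : EuclideanSpace ℝ (Fin n)) :
    EuclideanSpace ℝ (Fin n) :=
  (WithLp.equiv 2 _).symm (M.mulVec ((WithLp.equiv 2 _) x))

/-- The smallest singular value: `inf { ‖Mx‖₂ : ‖x‖₂ = 1 }`. -/
def sMin {n : ℕ} (M : Matrix (Fin n) (Fin n) ℝ) : ℝ :=
  sInf {r : ℝ | ∃ x : EuclideanSpace ℝ (Fin n), ‖x‖ = 1 ∧ r = ‖mulVecE M x‖}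

/-- Number of nonzero coordinates of a vector. -/
def suppCard {n : ℕ} (x : EuclideanSpace ℝ (Fin n)) : ℕ :=
  (Finset.univ.filter fun i => x i ≠ 0).card

/-- The set of `(α,ν)`-compressible unit vectors. -/
def compSet (n : ℕ) (α ν : ℝ) : Set (EuclideanSpace ℝ (Fin n)) :=
  {x | ‖x‖ = 1 ∧ ∃ v : EuclideanSpace ℝ (Fin n),
    ‖v‖ = 1 ∧ (suppCard v : ℝ) ≤ α * n ∧ ‖x - v‖ ≤ ν}

/-- The set of `(α,ν)`-incompressible unit vectors. -/
def incompSet (n : ℕ) (α ν : ℝ) : Set (EuclideanSpace ℝ (Fin n)) :=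
  {x : EuclideanSpace ℝ (Fin n) | ‖x‖ = 1} \ compSet n α ν

/-! If the middle range `Θ` had at most `αn/2` elements, then, since at most `αn/2` coordinates of
a unit vector exceed `√(2/(αn))` in absolute value, at most `αn` coordinates would exceed
`ν/√(2n)`. Keeping exactly those coordinates gives a vector `y` with `‖x - y‖² ≤ n · ν²/(2n)`,
and since `y` is the orthogonal projection of `x` on a coordinate subspace, the unit vector
`y/‖y‖` is within `√2 ‖x - y‖ ≤ ν` of `x`, so `x` would be compressible. -/

theorem norm_sub_inv_norm_smul_sq_le {E : Type*} [NormedAddCommGroup E] [InnerProductSpace ℝ E]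
    {x y : E} (hx : ‖x‖ = 1) (hxy : ⟪x - y, y⟫ = 0) :
    ‖x - ‖y‖⁻¹ • y‖ ^ 2 ≤ 2 * ‖x - y‖ ^ 2 := by
  rcases eq_or_ne y 0 with rfl | hy
  · simp [hx]
  have hy' : ‖y‖ ≠ 0 := norm_ne_zero_iff.mpr hy
  have hinner : ⟪x, y⟫ = ‖y‖ ^ 2 := by
    rw [← sub_add_cancel x y, inner_add_left, hxy, zero_add, real_inner_self_eq_norm_sq]
  have hnormalized : ‖x - ‖y‖⁻¹ • y‖ ^ 2 = 2 - 2 * ‖y‖ := by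
    rw [norm_sub_sq_real, inner_smul_right, norm_smul, hinner, hx, norm_inv, norm_norm]
    field_simp
    ring
  have hpythagoras : ‖x - y‖ ^ 2 = 1 - ‖y‖ ^ 2 := by
    rw [norm_sub_sq_real, hinner, hx]
    ring
  have hy1 : ‖y‖ ≤ 1 := by nlinarith [sq_nonneg ‖x - y‖, norm_nonneg y]
  rw [hnormalized, hpythagoras]
  nlinarith [norm_nonneg y]

namespace EuclideanSpace

variable {ι : Type*}

theorem card_filter_lt_abs_mul_sq_le_norm_sq [Fintype ι] (x : EuclideanSpace ℝ ι) {b : ℝ}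
    (hb : 0 ≤ b) :
    (#{i | b < |x i|} : ℝ) * b ^ 2 ≤ ‖x‖ ^ 2 := by
  rw [EuclideanSpace.norm_sq_eq, ← nsmul_eq_mul, ← sum_const]
  calc ∑ _i ∈ univ.filter (b < |x ·|), b ^ 2 ≤ ∑ i ∈ univ.filter (b < |x ·|), ‖x i‖ ^ 2 :=
        sum_le_sum fun i hi => by
          rw [Real.norm_eq_abs]
          exact pow_le_pow_left₀ hb (mem_filter.mp hi).2.le 2
    _ ≤ ∑ i, ‖x i‖ ^ 2 :=
        sum_le_sum_of_subset_of_nonneg (filter_subset _ _) fun i _ _ => by positivity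

theorem norm_sq_le_card_mul_sq [Fintype ι] {x : EuclideanSpace ℝ ι} {b : ℝ}
    (h : ∀ i, |x i| ≤ b) :
    ‖x‖ ^ 2 ≤ Fintype.card ι * b ^ 2 := by
  rw [EuclideanSpace.norm_sq_eq, ← card_univ, ← nsmul_eq_mul, ← sum_const]
  exact sum_le_sum fun i _ => by
    rw [Real.norm_eq_abs]
    exact pow_le_pow_left₀ (abs_nonneg _) (h i) 2

def restrictCoords [DecidableEq ι] (s : Finset ι) (x : EuclideanSpace ℝ ι) : EuclideanSpace ℝ ι :=
  WithLp.toLp 2 fun i => if i ∈ s then x i else 0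

theorem restrictCoords_apply [DecidableEq ι] (s : Finset ι) (x : EuclideanSpace ℝ ι) (i : ι) :
    restrictCoords s x i = if i ∈ s then x i else 0 :=
  rfl

theorem inner_sub_restrictCoords_restrictCoords [Fintype ι] [DecidableEq ι] (s : Finset ι)
    (x : EuclideanSpace ℝ ι) :
    ⟪x - restrictCoords s x, restrictCoords s x⟫ = 0 := by
  rw [PiLp.inner_apply]
  refine sum_eq_zero fun i _ => ?_
  simp only [PiLp.sub_apply, restrictCoords_apply]
  split_ifs <;> simp

theorem abs_sub_restrictCoords_le [DecidableEq ι] {s : Finset ι} {x : EuclideanSpace ℝ ι} {b : ℝ}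
    (hb : 0 ≤ b) (hs : ∀ i ∉ s, |x i| ≤ b) (i : ι) : |(x - restrictCoords s x) i| ≤ b := by
  simp only [PiLp.sub_apply, restrictCoords_apply]
  split_ifs with hi
  · simpa using hb
  · simpa using hs i hi

end EuclideanSpace

open EuclideanSpace in
theorem suppCard_smul_restrictCoords_le {n : ℕ} (c : ℝ) (s : Finset (Fin n))
    (x : EuclideanSpace ℝ (Fin n)) : suppCard (c • restrictCoords s x) ≤ #s := by
  refine card_le_card fun i hi => ?_
  by_contra his
  simp [restrictCoords_apply, his] at hi

open EuclideanSpace in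
theorem mem_compSet_of_norm_sub_restrictCoords_sq_le {n : ℕ} {α ν : ℝ}
    {x : EuclideanSpace ℝ (Fin n)} {s : Finset (Fin n)} (hx : ‖x‖ = 1) (hs : (#s : ℝ) ≤ α * n)
    (hν0 : 0 ≤ ν) (hν2 : ν ^ 2 < 2)
    (hxs : ‖x - restrictCoords s x‖ ^ 2 ≤ ν ^ 2 / 2) : x ∈ compSet n α ν := by
  set y := restrictCoords s x
  have hy : y ≠ 0 := by
    rintro hy
    rw [hy, sub_zero, hx] at hxs
    linarith
  refine ⟨hx, ‖y‖⁻¹ • y, ?_, ?_, ?_⟩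
  · rw [norm_smul, norm_inv, norm_norm, inv_mul_cancel₀ (norm_ne_zero_iff.mpr hy)]
  · exact (Nat.cast_le.mpr (suppCard_smul_restrictCoords_le _ s x)).trans hs
  · refine pow_le_pow_iff_left₀ (norm_nonneg _) hν0 two_ne_zero |>.mp ?_
    calc ‖x - ‖y‖⁻¹ • y‖ ^ 2 ≤ 2 * ‖x - y‖ ^ 2 :=
          norm_sub_inv_norm_smul_sq_le hx (inner_sub_restrictCoords_restrictCoords s x)
      _ ≤ ν ^ 2 := by linarith

open EuclideanSpace in
theorem stmt9_general (n : ℕ) (α ν : ℝ) (hα0 : 0 < α) (hν0 : 0 < ν) (hν1 : ν < 1)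
    (x : EuclideanSpace ℝ (Fin n)) (hx : x ∈ incompSet n α ν) :
    α * n / 2 <
      ((Finset.univ.filter fun i : Fin n =>
        ν / Real.sqrt (2 * n) < |x i| ∧ |x i| ≤ Real.sqrt (2 / (α * n))).card : ℝ) := by
  obtain ⟨hx1 : ‖x‖ = 1, hxc⟩ := hx
  have hn : 0 < (n : ℝ) := by
    rcases Nat.eq_zero_or_pos n with rfl | hn
    · simp [Subsingleton.elim x 0] at hx1
    · exact_mod_cast hn
  by_contra! hΘ
  set b := ν / √(2 * n)
  set B : Finset (Fin n) := {i | b < |x i|}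
  have hlarge : (#{i | √(2 / (α * n)) < |x i|} : ℝ) * 2 ≤ α * n := by
    have := card_filter_lt_abs_mul_sq_le_norm_sq x (sqrt_nonneg (2 / (α * n)))
    rwa [sq_sqrt (by positivity), hx1, one_pow, ← mul_div_assoc, div_le_one (by positivity)] at this
  have hB : (#B : ℝ) ≤ α * n := by
    have hsplit : B ⊆ ({i | b < |x i| ∧ |x i| ≤ √(2 / (α * n))} : Finset (Fin n)) ∪
        ({i | √(2 / (α * n)) < |x i|} : Finset (Fin n)) := fun i hi => by
      have hi : b < |x i| := (mem_filter.mp hi).2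
      rcases le_or_gt |x i| √(2 / (α * n)) with h | h
      · exact mem_union_left _ (mem_filter.mpr ⟨mem_univ _, hi, h⟩)
      · exact mem_union_right _ (mem_filter.mpr ⟨mem_univ _, h⟩)
    have hcard := (Nat.cast_le (α := ℝ)).mpr ((card_le_card hsplit).trans (card_union_le _ _))
    push_cast at hcard
    linarith
  refine hxc (mem_compSet_of_norm_sub_restrictCoords_sq_le hx1 hB hν0.le (by nlinarith) ?_)
  calc ‖x - restrictCoords B x‖ ^ 2 ≤ Fintype.card (Fin n) * b ^ 2 :=
        norm_sq_le_card_mul_sq (abs_sub_restrictCoords_le (by positivity) fun i hi => by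
          simpa [B] using hi)
    _ = ν ^ 2 / 2 := by
        rw [Fintype.card_fin, div_pow, sq_sqrt (by positivity)]
        field_simp

/-- incompressible vectors are spread. -/
theorem stmt9 (n : ℕ) (α ν : ℝ) (hα0 : 0 < α) (hα1 : α < 1) (hν0 : 0 < ν) (hν1 : ν < 1)
    (x : EuclideanSpace ℝ (Fin n)) (hx : x ∈ incompSet n α ν) :
    α * n / 2 <
      ((Finset.univ.filter fun i : Fin n =>
        ν / Real.sqrt (2 * n) < |x i| ∧ |x i| ≤ Real.sqrt (2 / (α * n))).card : ℝ) :=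
  stmt9_general n α ν hα0 hν0 hν1 x hx
end
end

section
/- Let n ≥ 1 and ε ∈ (0, 1/(2n)). Let A and E be n×n real matrices with ‖E‖ ≤ ‖A‖/2. Let 𝒜 be an ε-matvec for A, let ℰ be an ε-matvec for E, and let ℳ : ℝⁿ → ℝⁿ satisfy ‖ℳ(w) − (𝒜(w) + ℰ(w))‖₂ ≤ ε‖𝒜(w) + ℰ(w)‖₂ for every w ∈ ℝⁿ. Then ℳ is a 9ε-matvec for A + E, i.e., ‖ℳ(w) − (A+E)w‖₂ ≤ 9ε‖A+E‖‖w‖₂ for every w ∈ ℝⁿ. -/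
open MeasureTheory ProbabilityTheory Matrix Finset Real
open scoped ENNReal RealInnerProductSpace

noncomputable section

/-- `f` is an `ε`-matvec for `A`: `‖f w − A w‖₂ ≤ ε ‖A‖ ‖w‖₂` for all `w`. -/
def IsMatvec {n : ℕ} (ε : ℝ) (A : Matrix (Fin n) (Fin n) ℝ)
    (f : EuclideanSpace ℝ (Fin n) → EuclideanSpace ℝ (Fin n)) : Prop :=
  ∀ w : EuclideanSpace ℝ (Fin n), ‖f w - mulVecE A w‖ ≤ ε * specNorm A * ‖w‖

lemma mulVecE_eq_lin {n : ℕ} (M : Matrix (Fin n) (Fin n) ℝ) (x : EuclideanSpace ℝ (Fin n)) :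
    mulVecE M x = LinearMap.toContinuousLinearMap (Matrix.toEuclideanLin M) x := rfl

lemma norm_mulVecE_le {n : ℕ} (M : Matrix (Fin n) (Fin n) ℝ) (x : EuclideanSpace ℝ (Fin n)) :
    ‖mulVecE M x‖ ≤ specNorm M * ‖x‖ := by
  rw [mulVecE_eq_lin]; exact (LinearMap.toContinuousLinearMap (Matrix.toEuclideanLin M)).le_opNorm x

lemma specNorm_nonneg {n : ℕ} (M : Matrix (Fin n) (Fin n) ℝ) : 0 ≤ specNorm M :=
  norm_nonneg _

lemma specNorm_add_le' {n : ℕ} (M N : Matrix (Fin n) (Fin n) ℝ) :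
    specNorm (M + N) ≤ specNorm M + specNorm N := by
  unfold specNorm
  simp only [map_add]
  exact norm_add_le _ _

lemma specNorm_neg {n : ℕ} (M : Matrix (Fin n) (Fin n) ℝ) :
    specNorm (-M) = specNorm M := by
  unfold specNorm; simp only [map_neg, norm_neg]

lemma specNorm_sub_le {n : ℕ} (M N : Matrix (Fin n) (Fin n) ℝ) :
    specNorm M - specNorm N ≤ specNorm (M + N) := by
  have h : specNorm M ≤ specNorm (M + N) + specNorm N := by
    have h2 := specNorm_add_le' (M + N) (-N)
    rw [add_neg_cancel_right, specNorm_neg] at h2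
    exact h2
  linarith

lemma mulVecE_add {n : ℕ} (M N : Matrix (Fin n) (Fin n) ℝ) (x : EuclideanSpace ℝ (Fin n)) :
    mulVecE (M + N) x = mulVecE M x + mulVecE N x := by
  simp [mulVecE_eq_lin, map_add]

/-- perturbed matvec. -/
theorem stmt16 (n : ℕ) (hn : 1 ≤ n) (ε : ℝ) (hε0 : 0 < ε) (hε1 : ε < 1 / (2 * n))
    (A E : Matrix (Fin n) (Fin n) ℝ) (hE : specNorm E ≤ specNorm A / 2)
    (𝒜 ℰ ℳ : EuclideanSpace ℝ (Fin n) → EuclideanSpace ℝ (Fin n))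
    (hA : IsMatvec ε A 𝒜) (hEmv : IsMatvec ε E ℰ)
    (hM : ∀ w : EuclideanSpace ℝ (Fin n), ‖ℳ w - (𝒜 w + ℰ w)‖ ≤ ε * ‖𝒜 w + ℰ w‖) :
    IsMatvec (9 * ε) (A + E) ℳ := by
  intro w
  have hεhalf : ε < 1 / 2 := by
    have : (1:ℝ) ≤ n := by exact_mod_cast hn
    calc ε < 1 / (2 * n) := hε1
      _ ≤ 1 / 2 := by
        apply div_le_div_of_nonneg_left (by norm_num) (by norm_num) (by nlinarith)
  have hS : specNorm A ≤ 2 * specNorm (A + E) := by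
    have := specNorm_sub_le A E
    linarith
  have hSE : specNorm E ≤ specNorm (A + E) := by linarith
  set S := specNorm (A + E) with hSdef
  have hS0 : 0 ≤ S := specNorm_nonneg _
  -- bound on δ := ‖𝒜 w + ℰ w - mulVecE (A+E) w‖
  have hδ : ‖𝒜 w + ℰ w - mulVecE (A + E) w‖ ≤ 3 * ε * S * ‖w‖ := by
    have h1 := hA w
    have h2 := hEmv w
    have htri : ‖𝒜 w + ℰ w - mulVecE (A + E) w‖ ≤
        ‖𝒜 w - mulVecE A w‖ + ‖ℰ w - mulVecE E w‖ := by
      rw [mulVecE_add]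
      calc ‖𝒜 w + ℰ w - (mulVecE A w + mulVecE E w)‖
          = ‖(𝒜 w - mulVecE A w) + (ℰ w - mulVecE E w)‖ := by congr 1; abel
        _ ≤ _ := norm_add_le _ _
    have hw0 : 0 ≤ ‖w‖ := norm_nonneg _
    have e1 : ε * specNorm A * ‖w‖ ≤ ε * (2 * S) * ‖w‖ :=
      mul_le_mul_of_nonneg_right (mul_le_mul_of_nonneg_left hS hε0.le) hw0
    have e2 : ε * specNorm E * ‖w‖ ≤ ε * S * ‖w‖ :=
      mul_le_mul_of_nonneg_right (mul_le_mul_of_nonneg_left hSE hε0.le) hw0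
    nlinarith
  have hAEw : ‖mulVecE (A + E) w‖ ≤ S * ‖w‖ := norm_mulVecE_le _ _
  have hsum : ‖𝒜 w + ℰ w‖ ≤ (1 + 3 * ε) * S * ‖w‖ := by
    calc ‖𝒜 w + ℰ w‖ = ‖(𝒜 w + ℰ w - mulVecE (A + E) w) + mulVecE (A + E) w‖ := by
          congr 1; abel
      _ ≤ ‖𝒜 w + ℰ w - mulVecE (A + E) w‖ + ‖mulVecE (A + E) w‖ := norm_add_le _ _
      _ ≤ 3 * ε * S * ‖w‖ + S * ‖w‖ := add_le_add hδ hAEw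
      _ = (1 + 3 * ε) * S * ‖w‖ := by ring
  have hw0 : 0 ≤ ‖w‖ := norm_nonneg _
  calc ‖ℳ w - mulVecE (A + E) w‖
      = ‖(ℳ w - (𝒜 w + ℰ w)) + (𝒜 w + ℰ w - mulVecE (A + E) w)‖ := by congr 1; abel
    _ ≤ ‖ℳ w - (𝒜 w + ℰ w)‖ + ‖𝒜 w + ℰ w - mulVecE (A + E) w‖ := norm_add_le _ _
    _ ≤ ε * ‖𝒜 w + ℰ w‖ + 3 * ε * S * ‖w‖ := add_le_add (hM w) hδ
    _ ≤ ε * ((1 + 3 * ε) * S * ‖w‖) + 3 * ε * S * ‖w‖ := by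
        have := mul_le_mul_of_nonneg_left hsum hε0.le
        linarith
    _ ≤ 9 * ε * specNorm (A + E) * ‖w‖ := by
        rw [← hSdef]
        nlinarith [mul_nonneg (mul_nonneg hε0.le hS0) hw0,
          mul_nonneg (mul_nonneg (mul_nonneg hε0.le hε0.le) hS0) hw0]
end
end
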